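/- arXiv:2309.01107 — 3 statements merged into one kernel-verified Lean document; each statement's English description precedes it below -/
import Mathlib

section
/- Fix a policy π, a nominal reward R₀ : S → A → ℝ, a radius α > 0, and p ∈ (1,∞) with Hölder conjugate q = p/(p-1). Then the infimum of the return over the L_p ball around the nominal reward equals a regularized nominal return: ⨅ {ρ^π_R | R : S → A → ℝ, ‖R - R₀‖_p ≤ α} = ρ^π_{R₀} - α * ‖d^π‖_q, and this infimum is attained. -/
/-!
The return is linear in the reward, so `ρ_R = ρ_{R₀} + ⟨d^π, R - R₀⟩`. Hölder's inequality gives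
`⟨d, x⟩ ≥ -‖x‖_p ‖d‖_q ≥ -α ‖d‖_q` on the ball `‖x‖_p ≤ α`, and equality holds for
`x = -α ‖d‖_q^{1-q} · sign(d) |d|^{q-1}`, whose `p`-norm is exactly `α` because `(q - 1) p = q`.
-/

open Finset

noncomputable section

/-- `P^π(s,s') = ∑ a, π s a * P s a s'`. -/
def Pmat {S A : Type*} [Fintype A] (P : S → A → S → ℝ) (π : S → A → ℝ) :
    Matrix S S ℝ := fun s s' => ∑ a, π s a * P s a s'

/-- state occupation measure `d^π = μᵀ (I - γ P^π)⁻¹`. -/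
def dPi {S A : Type*} [Fintype S] [Fintype A] [DecidableEq S]
    (γ : ℝ) (P : S → A → S → ℝ) (μ : S → ℝ) (π : S → A → ℝ) : S → ℝ :=
  fun s' => ∑ s, μ s * (1 - γ • Pmat P π)⁻¹ s s'

/-- state-action occupation measure `d^π(s,a) = d^π(s) * π s a`. -/
def dSA {S A : Type*} [Fintype S] [Fintype A] [DecidableEq S]
    (γ : ℝ) (P : S → A → S → ℝ) (μ : S → ℝ) (π : S → A → ℝ) : S → A → ℝ :=
  fun s a => dPi γ P μ π s * π s a

/-- return `ρ^π_R = ∑_{s,a} d^π(s,a) * R(s,a)`. -/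
def mdpReturn {S A : Type*} [Fintype S] [Fintype A] [DecidableEq S]
    (γ : ℝ) (P : S → A → S → ℝ) (μ : S → ℝ) (π : S → A → ℝ) (R : S → A → ℝ) : ℝ :=
  ∑ s, ∑ a, dSA γ P μ π s a * R s a

/-- `‖x‖_r = (∑_{s,a} |x(s,a)|^r)^{1/r}` with real exponents via `Real.rpow`. -/
def LpNorm {S A : Type*} [Fintype S] [Fintype A] (r : ℝ) (x : S → A → ℝ) : ℝ :=
  (∑ s, ∑ a, |x s a| ^ r) ^ (1 / r)

end

section LpDuality

open Real

/-- Applied entrywise to `d`, this gives the vector attaining equality in Hölder's inequality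
against `d`. -/
noncomputable def holderDual (q t : ℝ) : ℝ := Real.sign t * |t| ^ (q - 1)

lemma abs_holderDual {q : ℝ} (hq : 1 < q) (t : ℝ) : |holderDual q t| = |t| ^ (q - 1) := by
  rcases lt_trichotomy t 0 with h | rfl | h
  · simp [holderDual, Real.sign_of_neg h, abs_of_nonneg (rpow_nonneg (abs_nonneg _) _)]
  · simp [holderDual, zero_rpow (sub_ne_zero.mpr hq.ne')]
  · simp [holderDual, Real.sign_of_pos h, abs_of_nonneg (rpow_nonneg (abs_nonneg _) _)]

lemma mul_holderDual {q : ℝ} (hq : 0 < q) (t : ℝ) : t * holderDual q t = |t| ^ q := by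
  have hsign : t * Real.sign t = |t| := by
    rcases lt_trichotomy t 0 with h | rfl | h
    · rw [Real.sign_of_neg h, abs_of_neg h]; ring
    · simp
    · rw [Real.sign_of_pos h, abs_of_pos h]; ring
  calc t * holderDual q t = |t| ^ (1 : ℝ) * |t| ^ (q - 1) := by
        rw [holderDual, ← mul_assoc, hsign, rpow_one]
    _ = |t| ^ q := by
        rw [← rpow_add' (abs_nonneg _) (by simpa using hq.ne')]; ring_nf

variable {S A : Type*} [Fintype S] [Fintype A]

lemma LpNorm_eq_sum_prod (r : ℝ) (x : S → A → ℝ) :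
    LpNorm r x = (∑ i : S × A, |x i.1 i.2| ^ r) ^ (1 / r) := by
  rw [LpNorm, Fintype.sum_prod_type]

lemma LpNorm_nonneg (r : ℝ) (x : S → A → ℝ) : 0 ≤ LpNorm r x :=
  rpow_nonneg (sum_nonneg fun _ _ => sum_nonneg fun _ _ => rpow_nonneg (abs_nonneg _) _) _

lemma LpNorm_zero {r : ℝ} (hr : r ≠ 0) : LpNorm r (0 : S → A → ℝ) = 0 := by
  simp [LpNorm, zero_rpow hr, zero_rpow (inv_ne_zero hr)]

lemma LpNorm_neg (r : ℝ) (x : S → A → ℝ) : LpNorm r (fun s a => -x s a) = LpNorm r x := by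
  simp only [LpNorm, abs_neg]

lemma LpNorm_const_mul {r : ℝ} (hr : 0 < r) (c : ℝ) (x : S → A → ℝ) :
    LpNorm r (fun s a => c * x s a) = |c| * LpNorm r x := by
  simp only [LpNorm, abs_mul, mul_rpow (abs_nonneg c) (abs_nonneg _), ← mul_sum]
  rw [mul_rpow (rpow_nonneg (abs_nonneg c) _)
      (sum_nonneg fun _ _ => sum_nonneg fun _ _ => rpow_nonneg (abs_nonneg _) _),
    ← rpow_mul (abs_nonneg c), mul_one_div_cancel hr.ne', rpow_one]

lemma LpNorm_rpow {r : ℝ} (hr : 0 < r) (x : S → A → ℝ) :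
    LpNorm r x ^ r = ∑ s, ∑ a, |x s a| ^ r := by
  rw [LpNorm,
    ← rpow_mul (sum_nonneg fun _ _ => sum_nonneg fun _ _ => rpow_nonneg (abs_nonneg _) _),
    one_div_mul_cancel hr.ne', rpow_one]

lemma sum_mul_le_LpNorm_mul_LpNorm {p q : ℝ} (hpq : p.HolderConjugate q) (x y : S → A → ℝ) :
    ∑ s, ∑ a, x s a * y s a ≤ LpNorm p x * LpNorm q y := by
  simpa only [LpNorm_eq_sum_prod, Fintype.sum_prod_type] using
    inner_le_Lp_mul_Lq univ (fun i : S × A => x i.1 i.2) (fun i => y i.1 i.2) hpq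

lemma neg_LpNorm_mul_LpNorm_le_sum_mul {p q : ℝ} (hpq : p.HolderConjugate q)
    (x y : S → A → ℝ) : -(LpNorm p x * LpNorm q y) ≤ ∑ s, ∑ a, x s a * y s a := by
  have := sum_mul_le_LpNorm_mul_LpNorm hpq (fun s a => -x s a) y
  simp only [LpNorm_neg, neg_mul, sum_neg_distrib] at this
  linarith

lemma LpNorm_holderDual {p q : ℝ} (hpq : p.HolderConjugate q) (d : S → A → ℝ) :
    LpNorm p (fun s a => holderDual q (d s a)) = LpNorm q d ^ (q - 1) := by
  simp only [LpNorm, abs_holderDual hpq.symm.lt, ← rpow_mul (abs_nonneg _),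
    hpq.symm.sub_one_mul_conj]
  rw [← rpow_mul (sum_nonneg fun _ _ => sum_nonneg fun _ _ => rpow_nonneg (abs_nonneg _) _)]
  congr 1
  rw [← hpq.symm.div_conj_eq_sub_one]
  field_simp [hpq.ne_zero, hpq.symm.ne_zero]

lemma sum_mul_holderDual {q : ℝ} (hq : 0 < q) (d : S → A → ℝ) :
    ∑ s, ∑ a, d s a * holderDual q (d s a) = LpNorm q d ^ q := by
  simp only [mul_holderDual hq, LpNorm_rpow hq]

lemma exists_LpNorm_le_sum_mul_eq {p q α : ℝ} (hpq : p.HolderConjugate q) (hα : 0 ≤ α)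
    (d : S → A → ℝ) :
    ∃ x : S → A → ℝ, LpNorm p x ≤ α ∧ ∑ s, ∑ a, d s a * x s a = -(α * LpNorm q d) := by
  rcases (LpNorm_nonneg q d).eq_or_lt with hN | hN
  · exact ⟨0, by rw [LpNorm_zero hpq.ne_zero]; exact hα, by simp [← hN]⟩
  set N := LpNorm q d
  have hNpow : 0 < N ^ (q - 1) := rpow_pos_of_pos hN _
  refine ⟨fun s a => -(α / N ^ (q - 1)) * holderDual q (d s a), ?_, ?_⟩
  · rw [LpNorm_const_mul hpq.pos, LpNorm_holderDual hpq, abs_neg,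
      abs_of_nonneg (div_nonneg hα hNpow.le), div_mul_cancel₀ _ hNpow.ne']
  · simp only [mul_left_comm (d _ _), ← mul_sum, sum_mul_holderDual hpq.symm.pos]
    have hNq : N ^ q = N ^ (q - 1) * N := by rw [← rpow_add_one hN.ne', sub_add_cancel]
    rw [hNq]
    field_simp

theorem isLeast_sum_mul_LpNorm_ball {p q α : ℝ} (hpq : p.HolderConjugate q) (hα : 0 ≤ α)
    (d R₀ : S → A → ℝ) :
    IsLeast {r : ℝ | ∃ R : S → A → ℝ,
        LpNorm p (fun s a => R s a - R₀ s a) ≤ α ∧ r = ∑ s, ∑ a, d s a * R s a}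
      (∑ s, ∑ a, d s a * R₀ s a - α * LpNorm q d) := by
  have hshift (R : S → A → ℝ) : ∑ s, ∑ a, d s a * R s a
      = ∑ s, ∑ a, d s a * R₀ s a + ∑ s, ∑ a, d s a * (R s a - R₀ s a) := by
    simp only [← sum_add_distrib, mul_sub, add_sub_cancel]
  constructor
  · obtain ⟨x, hx, hdx⟩ := exists_LpNorm_le_sum_mul_eq hpq hα d
    refine ⟨fun s a => R₀ s a + x s a, by simpa using hx, ?_⟩
    rw [hshift (fun s a => R₀ s a + x s a)]
    simp only [add_sub_cancel_left, hdx]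
    ring
  · rintro r ⟨R, hR, rfl⟩
    have := neg_LpNorm_mul_LpNorm_le_sum_mul hpq.symm d (fun s a => R s a - R₀ s a)
    rw [hshift R]
    nlinarith [LpNorm_nonneg q d]

end LpDuality

theorem stmt_2_general {S A : Type*} [Fintype S] [Fintype A] [DecidableEq S]
    (γ : ℝ) (P : S → A → S → ℝ) (μ : S → ℝ) (π : S → A → ℝ)
    (R₀ : S → A → ℝ) (α : ℝ) (hα : 0 < α)
    (p q : ℝ) (hp : 1 < p) (hq : q = p / (p - 1)) :
    IsLeast {r : ℝ | ∃ R : S → A → ℝ,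
        LpNorm p (fun s a => R s a - R₀ s a) ≤ α ∧ r = mdpReturn γ P μ π R}
      (mdpReturn γ P μ π R₀ - α * LpNorm q (dSA γ P μ π)) :=
  isLeast_sum_mul_LpNorm_ball ((Real.holderConjugate_iff_eq_conjExponent hp).mpr hq) hα.le _ R₀

theorem stmt_2 {S A : Type*} [Fintype S] [Fintype A] [Nonempty S] [Nonempty A] [DecidableEq S]
    (γ : ℝ) (hγ0 : 0 ≤ γ) (hγ1 : γ < 1)
    (P : S → A → S → ℝ) (hP : ∀ s a s', 0 ≤ P s a s')
    (hPsum : ∀ s a, ∑ s', P s a s' = 1)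
    (μ : S → ℝ) (hμ : ∀ s, 0 < μ s) (hμsum : ∑ s, μ s = 1)
    (π : S → A → ℝ) (hπ : ∀ s a, 0 ≤ π s a) (hπsum : ∀ s, ∑ a, π s a = 1)
    (R₀ : S → A → ℝ) (α : ℝ) (hα : 0 < α)
    (p q : ℝ) (hp : 1 < p) (hq : q = p / (p - 1)) :
    IsLeast {r : ℝ | ∃ R : S → A → ℝ,
        LpNorm p (fun s a => R s a - R₀ s a) ≤ α ∧ r = mdpReturn γ P μ π R}
      (mdpReturn γ P μ π R₀ - α * LpNorm q (dSA γ P μ π)) :=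
  stmt_2_general γ P μ π R₀ α hα p q hp hq
end

section
/- Fix a policy π, a nominal reward R₀ : S → A → ℝ, and α > 0. Let M = max_{(s,a) ∈ S×A} d^π(s,a) and let X* = {(s,a) ∈ S×A | d^π(s,a) = M} (a nonempty finite set). For the L_1 reward uncertainty set {R : S → A → ℝ | ∑_{s,a} |R(s,a) - R₀(s,a)| ≤ α} (the case p = 1, q = ∞), the infimum of ρ^π_R over this set equals ρ^π_{R₀} - α * M, and it is attained at the one-hot-penalized reward R*(s,a) = R₀(s,a) - (α / |X*|) · 1{(s,a) ∈ X*}, which satisfies ∑_{s,a} |R*(s,a) - R₀(s,a)| = α. -/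
open Finset

/-! Since `(1 - γ P^π)⁻¹` has nonnegative entries (a minimum principle for `w = e + γ P^π w`),
`d^π ≥ 0`, and the return is linear in the reward, so
`ρ_R - ρ_{R₀} = ⟨d^π, R - R₀⟩ ≥ -‖d^π‖_∞ ‖R - R₀‖₁ ≥ -α M` (Hölder for `ℓ¹`, `ℓ^∞`).
Equality holds as soon as the whole budget `α` is spent, with a negative sign, on pairs where
`d^π` attains its maximum `M`; `R*` spreads it uniformly over `X*`. -/

section L1Duality

variable {ι : Type*} [Fintype ι] {d : ι → ℝ} {M α : ℝ}

theorem neg_mul_le_sum_mul_of_sum_abs_le (hd0 : ∀ i, 0 ≤ d i) (hdM : ∀ i, d i ≤ M)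
    (hM : 0 ≤ M) {δ : ι → ℝ} (hδ : ∑ i, |δ i| ≤ α) : -(α * M) ≤ ∑ i, d i * δ i := by
  have hpoint : ∀ i, -(M * |δ i|) ≤ d i * δ i := fun i => by
    have h₁ : d i * |δ i| ≤ M * |δ i| := mul_le_mul_of_nonneg_right (hdM i) (abs_nonneg _)
    have h₂ : d i * -|δ i| ≤ d i * δ i := mul_le_mul_of_nonneg_left (neg_abs_le _) (hd0 i)
    linarith
  calc -(α * M) ≤ -(M * ∑ i, |δ i|) := by
        rw [mul_comm α]; exact neg_le_neg (mul_le_mul_of_nonneg_left hδ hM)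
    _ = ∑ i, -(M * |δ i|) := by rw [Finset.mul_sum, Finset.sum_neg_distrib]
    _ ≤ ∑ i, d i * δ i := Finset.sum_le_sum fun i _ => hpoint i

variable [DecidableEq ι] {X : Finset ι}

theorem sum_abs_ite_mem_div_card (hX : X.Nonempty) (hα : 0 ≤ α) :
    ∑ i, |if i ∈ X then α / X.card else 0| = α := by
  have hcard : (X.card : ℝ) ≠ 0 := by exact_mod_cast hX.card_pos.ne'
  simp only [apply_ite abs, abs_zero, abs_of_nonneg (by positivity : 0 ≤ α / X.card)]
  rw [Finset.sum_ite_mem, Finset.univ_inter, Finset.sum_const, nsmul_eq_mul]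
  field_simp

theorem sum_mul_ite_mem_div_card (hX : X.Nonempty) (hdX : ∀ i ∈ X, d i = M) :
    ∑ i, d i * (if i ∈ X then α / X.card else 0) = α * M := by
  have hcard : (X.card : ℝ) ≠ 0 := by exact_mod_cast hX.card_pos.ne'
  simp only [mul_ite, mul_zero]
  rw [Finset.sum_ite_mem, Finset.univ_inter, Finset.sum_congr rfl fun i hi => by rw [hdX i hi],
    Finset.sum_const, nsmul_eq_mul]
  field_simp

end L1Duality

theorem Matrix.inv_one_sub_smul_apply_nonneg {n : Type*} [Fintype n] [DecidableEq n]
    {Q : Matrix n n ℝ} (hQ : ∀ i j, 0 ≤ Q i j) (hQ1 : ∀ i, ∑ j, Q i j = 1)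
    {γ : ℝ} (hγ0 : 0 ≤ γ) (hγ1 : γ < 1) (i j : n) : 0 ≤ (1 - γ • Q)⁻¹ i j := by
  by_cases hu : IsUnit (1 - γ • Q).det
  swap
  · simp [Matrix.nonsing_inv_apply_not_isUnit _ hu]
  set B := (1 - γ • Q)⁻¹
  have hB : B = 1 + γ • (Q * B) := by
    have h := Matrix.mul_nonsing_inv (1 - γ • Q) hu
    rwa [Matrix.sub_mul, Matrix.one_mul, Matrix.smul_mul, sub_eq_iff_eq_add] at h
  -- Minimum principle: the `j`-th column `w` of `B` solves `w = 𝟙_j + γ Q w`.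
  obtain ⟨t, -, ht⟩ := Finset.exists_min_image Finset.univ (B · j) ⟨i, Finset.mem_univ i⟩
  have hQw : B t j ≤ ∑ u, Q t u * B u j := calc
    B t j = ∑ u, Q t u * B t j := by rw [← Finset.sum_mul, hQ1, one_mul]
    _ ≤ ∑ u, Q t u * B u j := Finset.sum_le_sum fun u _ =>
      mul_le_mul_of_nonneg_left (ht u (Finset.mem_univ u)) (hQ t u)
  have hBt : B t j = (1 : Matrix n n ℝ) t j + γ * ∑ u, Q t u * B u j := by
    conv_lhs => rw [hB]
    simp [Matrix.mul_apply]
  have h1 : (0 : ℝ) ≤ (1 : Matrix n n ℝ) t j := by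
    rw [Matrix.one_apply]; positivity
  have hmin : 0 ≤ B t j := by nlinarith
  exact hmin.trans (ht i (Finset.mem_univ i))

section MDP

variable {S A : Type*} [Fintype A] {P : S → A → S → ℝ} {π : S → A → ℝ}

theorem Pmat_nonneg (hP : ∀ s a s', 0 ≤ P s a s') (hπ : ∀ s a, 0 ≤ π s a) (s s' : S) :
    0 ≤ Pmat P π s s' :=
  Finset.sum_nonneg fun a _ => mul_nonneg (hπ s a) (hP s a s')

theorem Pmat_row_sum [Fintype S] (hPsum : ∀ s a, ∑ s', P s a s' = 1)
    (hπsum : ∀ s, ∑ a, π s a = 1) (s : S) : ∑ s', Pmat P π s s' = 1 := by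
  simp only [Pmat]
  rw [Finset.sum_comm]
  simp only [← Finset.mul_sum, hPsum, mul_one, hπsum]

variable [Fintype S] [DecidableEq S] {γ : ℝ} {μ : S → ℝ}

theorem dSA_nonneg (hγ0 : 0 ≤ γ) (hγ1 : γ < 1) (hP : ∀ s a s', 0 ≤ P s a s')
    (hPsum : ∀ s a, ∑ s', P s a s' = 1) (hμ : ∀ s, 0 ≤ μ s) (hπ : ∀ s a, 0 ≤ π s a)
    (hπsum : ∀ s, ∑ a, π s a = 1) (s : S) (a : A) : 0 ≤ dSA γ P μ π s a :=
  mul_nonneg (Finset.sum_nonneg fun t _ => mul_nonneg (hμ t)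
    (Matrix.inv_one_sub_smul_apply_nonneg (Pmat_nonneg hP hπ) (Pmat_row_sum hPsum hπsum)
      hγ0 hγ1 t s)) (hπ s a)

theorem mdpReturn_sub_mdpReturn (R R₀ : S → A → ℝ) :
    mdpReturn γ P μ π R - mdpReturn γ P μ π R₀ =
      ∑ x : S × A, dSA γ P μ π x.1 x.2 * (R x.1 x.2 - R₀ x.1 x.2) := by
  simp only [mdpReturn, Fintype.sum_prod_type, mul_sub, Finset.sum_sub_distrib]

end MDP

theorem stmt_4_general {S A : Type*} [Fintype S] [Fintype A] [Nonempty S] [Nonempty A]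
    [DecidableEq S] [DecidableEq A]
    (γ : ℝ) (hγ0 : 0 ≤ γ) (hγ1 : γ < 1)
    (P : S → A → S → ℝ) (hP : ∀ s a s', 0 ≤ P s a s')
    (hPsum : ∀ s a, ∑ s', P s a s' = 1)
    (μ : S → ℝ) (hμ : ∀ s, 0 < μ s)
    (π : S → A → ℝ) (hπ : ∀ s a, 0 ≤ π s a) (hπsum : ∀ s, ∑ a, π s a = 1)
    (R₀ : S → A → ℝ) (α : ℝ) (hα : 0 < α)
    (M : ℝ)
    (hM : M = Finset.univ.sup' Finset.univ_nonempty
      (fun sa : S × A => dSA γ P μ π sa.1 sa.2))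
    (Xstar : Finset (S × A))
    (hXstar : ∀ sa : S × A, sa ∈ Xstar ↔ dSA γ P μ π sa.1 sa.2 = M)
    (Rstar : S → A → ℝ)
    (hRstar : ∀ s a, Rstar s a =
      R₀ s a - (if (s, a) ∈ Xstar then α / (Xstar.card : ℝ) else 0)) :
    Xstar.Nonempty ∧
    IsLeast {r : ℝ | ∃ R : S → A → ℝ,
        (∑ s, ∑ a, |R s a - R₀ s a|) ≤ α ∧ r = mdpReturn γ P μ π R}
      (mdpReturn γ P μ π R₀ - α * M) ∧
    mdpReturn γ P μ π Rstar = mdpReturn γ P μ π R₀ - α * M ∧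
    (∑ s, ∑ a, |Rstar s a - R₀ s a|) = α := by
  set d : S × A → ℝ := fun x => dSA γ P μ π x.1 x.2
  have hd0 : ∀ x, 0 ≤ d x := fun x =>
    dSA_nonneg hγ0 hγ1 hP hPsum (fun s => (hμ s).le) hπ hπsum x.1 x.2
  have hdM : ∀ x, d x ≤ M := fun x => hM ▸ Finset.le_sup' d (Finset.mem_univ x)
  obtain ⟨x₀, -, hx₀⟩ := Finset.exists_mem_eq_sup' Finset.univ_nonempty d
  have hne : Xstar.Nonempty := ⟨x₀, (hXstar x₀).2 (hM ▸ hx₀.symm)⟩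
  have hM0 : 0 ≤ M := (hd0 x₀).trans (hdM x₀)
  have hpen : ∀ x : S × A, Rstar x.1 x.2 - R₀ x.1 x.2 =
      -(if x ∈ Xstar then α / Xstar.card else 0) := fun x => by rw [hRstar]; ring
  have hnorm : ∑ s, ∑ a, |Rstar s a - R₀ s a| = α := by
    rw [← Fintype.sum_prod_type']
    simp only [hpen, abs_neg]
    exact sum_abs_ite_mem_div_card hne hα.le
  have hret : mdpReturn γ P μ π Rstar = mdpReturn γ P μ π R₀ - α * M := by
    have h := mdpReturn_sub_mdpReturn (γ := γ) (P := P) (μ := μ) (π := π) Rstar R₀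
    simp only [hpen, mul_neg, Finset.sum_neg_distrib,
      sum_mul_ite_mem_div_card hne fun x hx => (hXstar x).1 hx] at h
    linarith
  refine ⟨hne, ⟨⟨Rstar, hnorm.le, hret.symm⟩, ?_⟩, hret, hnorm⟩
  rintro _ ⟨R, hR, rfl⟩
  have hdiff : mdpReturn γ P μ π R - mdpReturn γ P μ π R₀ =
      ∑ x, d x * (R x.1 x.2 - R₀ x.1 x.2) := mdpReturn_sub_mdpReturn R R₀
  have hbound := neg_mul_le_sum_mul_of_sum_abs_le hd0 hdM hM0
    ((Fintype.sum_prod_type' fun s a => |R s a - R₀ s a|).trans_le hR)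
  linarith

theorem stmt_4 {S A : Type*} [Fintype S] [Fintype A] [Nonempty S] [Nonempty A]
    [DecidableEq S] [DecidableEq A]
    (γ : ℝ) (hγ0 : 0 ≤ γ) (hγ1 : γ < 1)
    (P : S → A → S → ℝ) (hP : ∀ s a s', 0 ≤ P s a s')
    (hPsum : ∀ s a, ∑ s', P s a s' = 1)
    (μ : S → ℝ) (hμ : ∀ s, 0 < μ s) (hμsum : ∑ s, μ s = 1)
    (π : S → A → ℝ) (hπ : ∀ s a, 0 ≤ π s a) (hπsum : ∀ s, ∑ a, π s a = 1)
    (R₀ : S → A → ℝ) (α : ℝ) (hα : 0 < α)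
    (M : ℝ)
    (hM : M = Finset.univ.sup' Finset.univ_nonempty
      (fun sa : S × A => dSA γ P μ π sa.1 sa.2))
    (Xstar : Finset (S × A))
    (hXstar : ∀ sa : S × A, sa ∈ Xstar ↔ dSA γ P μ π sa.1 sa.2 = M)
    (Rstar : S → A → ℝ)
    (hRstar : ∀ s a, Rstar s a =
      R₀ s a - (if (s, a) ∈ Xstar then α / (Xstar.card : ℝ) else 0)) :
    Xstar.Nonempty ∧
    IsLeast {r : ℝ | ∃ R : S → A → ℝ,
        (∑ s, ∑ a, |R s a - R₀ s a|) ≤ α ∧ r = mdpReturn γ P μ π R}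
      (mdpReturn γ P μ π R₀ - α * M) ∧
    mdpReturn γ P μ π Rstar = mdpReturn γ P μ π R₀ - α * M ∧
    (∑ s, ∑ a, |Rstar s a - R₀ s a|) = α :=
  stmt_4_general γ hγ0 hγ1 P hP hPsum μ hμ π hπ hπsum R₀ α hα M hM Xstar hXstar Rstar hRstar
end

section
/- Let R : S → A → ℝ be a reward function with |R(s,a)| ≤ 1 for all (s,a). Then the return is Lipschitz in the policy with constant |A| / (1-γ)²: for all policies π and π', |ρ^{π'}_R - ρ^π_R| ≤ (|A| / (1-γ)²) * (∑_{s,a} (π'(s,a) - π(s,a))²)^{1/2}. -/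
open Finset

/-!
The performance difference lemma writes `ρ^π' - ρ^π` as
`∑ s, d^π'(s) * ∑ a, (π'(s,a) - π(s,a)) * Q^π(s,a)`, where `V^π = (I - γ P^π)⁻¹ r^π` and
`Q^π(s,a) = R(s,a) + γ ∑ s', P(s,a,s') V^π(s')`. For a row-stochastic `M`,
`(I - γ M)⁻¹ = ∑ₖ γᵏ Mᵏ` is entrywise nonnegative with row sums `1 / (1 - γ)`; hence
`|Q^π| ≤ 1 / (1 - γ)` and `d^π'` has total mass `1 / (1 - γ)`. Bounding each `|π'(s,a) - π(s,a)|`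
by the `ℓ²` norm of `π' - π` gives the remaining factor `|A|`.
-/

namespace Matrix

section LinftyOpNorm

attribute [local instance] Matrix.linftyOpNormedRing Matrix.linftyOpNormedAlgebra

variable {n : Type*} [Fintype n] [DecidableEq n] {M : Matrix n n ℝ} {γ : ℝ}

lemma linfty_opNorm_le_one_of_mem_rowStochastic (hM : M ∈ rowStochastic ℝ n) : ‖M‖ ≤ 1 := by
  rw [linfty_opNorm_def]
  norm_cast
  refine Finset.sup_le fun i _ => ?_
  rw [← NNReal.coe_le_coe]
  push_cast
  simp only [Real.norm_eq_abs]
  rw [← sum_row_of_mem_rowStochastic hM i]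
  exact (Finset.sum_congr rfl fun j _ => abs_of_nonneg (nonneg_of_mem_rowStochastic hM)).le

lemma norm_smul_lt_one_of_mem_rowStochastic (hγ0 : 0 ≤ γ) (hγ1 : γ < 1)
    (hM : M ∈ rowStochastic ℝ n) : ‖γ • M‖ < 1 := by
  calc ‖γ • M‖ ≤ ‖γ‖ * ‖M‖ := norm_smul_le _ _
    _ ≤ γ * 1 := by
      rw [Real.norm_of_nonneg hγ0]
      exact mul_le_mul_of_nonneg_left (linfty_opNorm_le_one_of_mem_rowStochastic hM) hγ0
    _ < 1 := by linarith

lemma hasSum_inv_one_sub_smul_of_mem_rowStochastic (hγ0 : 0 ≤ γ) (hγ1 : γ < 1)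
    (hM : M ∈ rowStochastic ℝ n) : HasSum (fun k : ℕ => γ ^ k • M ^ k) (1 - γ • M)⁻¹ := by
  have h := hasSum_geom_series_inverse _ (norm_smul_lt_one_of_mem_rowStochastic hγ0 hγ1 hM)
  simp only [← nonsing_inv_eq_ringInverse, smul_pow] at h
  exact h

lemma isUnit_det_one_sub_smul_of_mem_rowStochastic (hγ0 : 0 ≤ γ) (hγ1 : γ < 1)
    (hM : M ∈ rowStochastic ℝ n) : IsUnit (1 - γ • M).det :=
  (isUnit_iff_isUnit_det _).1
    (isUnit_one_sub_of_norm_lt_one (norm_smul_lt_one_of_mem_rowStochastic hγ0 hγ1 hM))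

end LinftyOpNorm

variable {n : Type*} [Fintype n] [DecidableEq n] {M : Matrix n n ℝ} {γ : ℝ}

lemma inv_one_sub_smul_nonneg_of_mem_rowStochastic (hγ0 : 0 ≤ γ) (hγ1 : γ < 1)
    (hM : M ∈ rowStochastic ℝ n) (i j : n) : 0 ≤ (1 - γ • M)⁻¹ i j := by
  have h := hasSum_inv_one_sub_smul_of_mem_rowStochastic hγ0 hγ1 hM
  exact (Pi.hasSum.1 (Pi.hasSum.1 h i) j).nonneg fun k => mul_nonneg (pow_nonneg hγ0 k)
    (nonneg_of_mem_rowStochastic (pow_mem hM k))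

lemma inv_one_sub_smul_mulVec_one_of_mem_rowStochastic (hγ0 : 0 ≤ γ) (hγ1 : γ < 1)
    (hM : M ∈ rowStochastic ℝ n) : (1 - γ • M)⁻¹ *ᵥ 1 = (1 - γ)⁻¹ • 1 := by
  have hu := isUnit_det_one_sub_smul_of_mem_rowStochastic hγ0 hγ1 hM
  have h : (1 - γ • M) *ᵥ 1 = (1 - γ) • (1 : n → ℝ) := by
    rw [sub_mulVec, smul_mulVec, one_vecMul_of_mem_rowStochastic hM, one_mulVec, sub_smul,
      one_smul]
  have hγ : 1 - γ ≠ 0 := by linarith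
  calc (1 - γ • M)⁻¹ *ᵥ 1 = (1 - γ)⁻¹ • ((1 - γ • M)⁻¹ *ᵥ ((1 - γ • M) *ᵥ 1)) := by
        rw [h, mulVec_smul, smul_smul, inv_mul_cancel₀ hγ, one_smul]
    _ = (1 - γ)⁻¹ • 1 := by rw [mulVec_mulVec, nonsing_inv_mul _ hu, one_mulVec]

lemma sum_inv_one_sub_smul_apply_of_mem_rowStochastic (hγ0 : 0 ≤ γ) (hγ1 : γ < 1)
    (hM : M ∈ rowStochastic ℝ n) (i : n) : ∑ j, (1 - γ • M)⁻¹ i j = (1 - γ)⁻¹ := by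
  simpa [mulVec, dotProduct] using
    congrFun (inv_one_sub_smul_mulVec_one_of_mem_rowStochastic hγ0 hγ1 hM) i

end Matrix

open Matrix

lemma abs_sum_mul_le_sum_abs_mul {ι : Type*} (s : Finset ι) (w f : ι → ℝ) {C : ℝ}
    (hf : ∀ i ∈ s, |f i| ≤ C) : |∑ i ∈ s, w i * f i| ≤ (∑ i ∈ s, |w i|) * C := by
  rw [Finset.sum_mul]
  refine (Finset.abs_sum_le_sum_abs _ _).trans (Finset.sum_le_sum fun i hi => ?_)
  rw [abs_mul]
  exact mul_le_mul_of_nonneg_left (hf i hi) (abs_nonneg _)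

lemma abs_sum_mul_le_sum_mul_of_nonneg {ι : Type*} (s : Finset ι) {w f : ι → ℝ} {C : ℝ}
    (hw : ∀ i ∈ s, 0 ≤ w i) (hf : ∀ i ∈ s, |f i| ≤ C) :
    |∑ i ∈ s, w i * f i| ≤ (∑ i ∈ s, w i) * C := by
  simpa only [Finset.sum_congr rfl fun i hi => abs_of_nonneg (hw i hi)] using
    abs_sum_mul_le_sum_abs_mul s w f hf

section PolicyReward

variable {S A : Type*} [Fintype A] {σ : S → A → ℝ} {R : S → A → ℝ} {C : ℝ}

def policyReward (π R : S → A → ℝ) (s : S) : ℝ := ∑ a, π s a * R s a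

lemma abs_policyReward_le (hσ : ∀ s a, 0 ≤ σ s a) (hσsum : ∀ s, ∑ a, σ s a = 1)
    (hR : ∀ s a, |R s a| ≤ C) (s : S) : |policyReward σ R s| ≤ C := by
  simpa only [policyReward, hσsum, one_mul] using
    abs_sum_mul_le_sum_mul_of_nonneg univ (fun a _ => hσ s a) (fun a _ => hR s a)

end PolicyReward

section MDP

variable {S A : Type*} [Fintype S] [Fintype A] [DecidableEq S]
  {γ : ℝ} {P : S → A → S → ℝ} {μ : S → ℝ} {π σ : S → A → ℝ} {R : S → A → ℝ} {C : ℝ}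

noncomputable def policyValue (γ : ℝ) (P : S → A → S → ℝ) (π R : S → A → ℝ) : S → ℝ :=
  (1 - γ • Pmat P π)⁻¹ *ᵥ policyReward π R

noncomputable def actionValue (γ : ℝ) (P : S → A → S → ℝ) (π R : S → A → ℝ) (s : S) (a : A) : ℝ :=
  R s a + γ * ∑ s', P s a s' * policyValue γ P π R s'

lemma Pmat_mem_rowStochastic (hP : ∀ s a s', 0 ≤ P s a s') (hPsum : ∀ s a, ∑ s', P s a s' = 1)
    (hπ : ∀ s a, 0 ≤ π s a) (hπsum : ∀ s, ∑ a, π s a = 1) : Pmat P π ∈ rowStochastic ℝ S := by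
  refine mem_rowStochastic_iff_sum.2 ⟨fun s s' => ?_, fun s => ?_⟩
  · exact Finset.sum_nonneg fun a _ => mul_nonneg (hπ s a) (hP s a s')
  · simp only [Pmat]
    rw [Finset.sum_comm]
    simp only [← Finset.mul_sum, hPsum, mul_one, hπsum]

lemma dPi_eq_vecMul : dPi γ P μ π = μ ᵥ* (1 - γ • Pmat P π)⁻¹ := rfl

lemma mdpReturn_eq_dotProduct : mdpReturn γ P μ π R = dPi γ P μ π ⬝ᵥ policyReward π R := by
  simp only [mdpReturn, dSA, dotProduct, policyReward, Finset.mul_sum, mul_assoc]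

lemma one_sub_smul_mulVec_policyValue (hu : IsUnit (1 - γ • Pmat P π).det) :
    (1 - γ • Pmat P π) *ᵥ policyValue γ P π R = policyReward π R := by
  rw [policyValue, mulVec_mulVec, mul_nonsing_inv _ hu, one_mulVec]

lemma sum_mul_actionValue (s : S) :
    ∑ a, σ s a * actionValue γ P π R s a =
      policyReward σ R s + γ * (Pmat P σ *ᵥ policyValue γ P π R) s := by
  simp only [actionValue, policyReward, Pmat, mulVec, dotProduct, mul_add, Finset.sum_add_distrib,
    Finset.sum_mul, Finset.mul_sum]
  rw [Finset.sum_comm]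
  simp only [mul_left_comm, mul_assoc]

/-- The performance difference lemma. -/
lemma mdpReturn_sub_mdpReturn_s14 (hu : IsUnit (1 - γ • Pmat P π).det)
    (hu' : IsUnit (1 - γ • Pmat P σ).det) :
    mdpReturn γ P μ σ R - mdpReturn γ P μ π R =
      ∑ s, dPi γ P μ σ s * ∑ a, (σ s a - π s a) * actionValue γ P π R s a := by
  set v := policyValue γ P π R
  have hadv : (fun s => ∑ a, (σ s a - π s a) * actionValue γ P π R s a) =
      policyReward σ R - (1 - γ • Pmat P σ) *ᵥ v := by
    funext s
    have hv := congrFun (one_sub_smul_mulVec_policyValue (R := R) hu) s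
    simp only [sub_mul, Finset.sum_sub_distrib, sum_mul_actionValue, sub_mulVec, smul_mulVec,
      one_mulVec, Pi.sub_apply, Pi.smul_apply, smul_eq_mul] at hv ⊢
    linarith
  have hρ : mdpReturn γ P μ π R = μ ⬝ᵥ v := by
    rw [mdpReturn_eq_dotProduct, dPi_eq_vecMul, ← dotProduct_mulVec]; rfl
  calc _ = dPi γ P μ σ ⬝ᵥ (policyReward σ R - (1 - γ • Pmat P σ) *ᵥ v) := by
        rw [dotProduct_sub, hρ, mdpReturn_eq_dotProduct, dPi_eq_vecMul, dotProduct_mulVec,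
          vecMul_vecMul, nonsing_inv_mul _ hu', vecMul_one]
    _ = _ := by rw [← hadv]; rfl

lemma abs_policyValue_le (hγ0 : 0 ≤ γ) (hγ1 : γ < 1) (hM : Pmat P π ∈ rowStochastic ℝ S)
    (hπ : ∀ s a, 0 ≤ π s a) (hπsum : ∀ s, ∑ a, π s a = 1) (hR : ∀ s a, |R s a| ≤ C) (s : S) :
    |policyValue γ P π R s| ≤ C / (1 - γ) := by
  calc |policyValue γ P π R s| ≤ (∑ s', (1 - γ • Pmat P π)⁻¹ s s') * C :=
        abs_sum_mul_le_sum_mul_of_nonneg univ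
          (fun s' _ => inv_one_sub_smul_nonneg_of_mem_rowStochastic hγ0 hγ1 hM s s')
          (fun s' _ => abs_policyReward_le hπ hπsum hR s')
    _ = C / (1 - γ) := by
      rw [sum_inv_one_sub_smul_apply_of_mem_rowStochastic hγ0 hγ1 hM, inv_mul_eq_div]

lemma abs_actionValue_le (hγ0 : 0 ≤ γ) (hγ1 : γ < 1) (hP : ∀ s a s', 0 ≤ P s a s')
    (hPsum : ∀ s a, ∑ s', P s a s' = 1) (hπ : ∀ s a, 0 ≤ π s a) (hπsum : ∀ s, ∑ a, π s a = 1)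
    (hR : ∀ s a, |R s a| ≤ C) (s : S) (a : A) : |actionValue γ P π R s a| ≤ C / (1 - γ) := by
  have hM := Pmat_mem_rowStochastic hP hPsum hπ hπsum
  have hnext : |∑ s', P s a s' * policyValue γ P π R s'| ≤ C / (1 - γ) := by
    simpa only [hPsum, one_mul] using abs_sum_mul_le_sum_mul_of_nonneg univ
      (fun s' _ => hP s a s') (fun s' _ => abs_policyValue_le hγ0 hγ1 hM hπ hπsum hR s')
  have hγ : 1 - γ ≠ 0 := by linarith
  calc |actionValue γ P π R s a| ≤ |R s a| + |γ * ∑ s', P s a s' * policyValue γ P π R s'| :=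
        abs_add_le _ _
    _ = |R s a| + γ * |∑ s', P s a s' * policyValue γ P π R s'| := by
        rw [abs_mul, abs_of_nonneg hγ0]
    _ ≤ C + γ * (C / (1 - γ)) := by gcongr; exact hR s a
    _ = C / (1 - γ) := by field_simp; ring

lemma dPi_nonneg (hγ0 : 0 ≤ γ) (hγ1 : γ < 1) (hM : Pmat P π ∈ rowStochastic ℝ S)
    (hμ : ∀ s, 0 ≤ μ s) (s : S) : 0 ≤ dPi γ P μ π s :=
  Finset.sum_nonneg fun t _ =>
    mul_nonneg (hμ t) (inv_one_sub_smul_nonneg_of_mem_rowStochastic hγ0 hγ1 hM t s)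

lemma sum_dPi (hγ0 : 0 ≤ γ) (hγ1 : γ < 1) (hM : Pmat P π ∈ rowStochastic ℝ S)
    (hμsum : ∑ s, μ s = 1) : ∑ s, dPi γ P μ π s = (1 - γ)⁻¹ := by
  simp only [dPi]
  rw [Finset.sum_comm]
  simp only [← Finset.mul_sum, sum_inv_one_sub_smul_apply_of_mem_rowStochastic hγ0 hγ1 hM,
    ← Finset.sum_mul, hμsum, one_mul]

end MDP

lemma abs_le_rpow_sum_sum_sq {S A : Type*} [Fintype S] [Fintype A] (x : S → A → ℝ) (s : S)
    (a : A) : |x s a| ≤ (∑ s, ∑ a, x s a ^ 2) ^ ((1 : ℝ) / 2) := by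
  rw [← Real.sqrt_eq_rpow]
  refine Real.abs_le_sqrt ?_
  calc x s a ^ 2 ≤ ∑ a', x s a' ^ 2 :=
        Finset.single_le_sum (fun _ _ => sq_nonneg _) (mem_univ a)
    _ ≤ ∑ s', ∑ a', x s' a' ^ 2 :=
        Finset.single_le_sum (f := fun s' => ∑ a', x s' a' ^ 2)
          (fun _ _ => Finset.sum_nonneg fun _ _ => sq_nonneg _) (mem_univ s)

theorem stmt_14_general {S A : Type*} [Fintype S] [Fintype A] [DecidableEq S]
    (γ : ℝ) (hγ0 : 0 ≤ γ) (hγ1 : γ < 1)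
    (P : S → A → S → ℝ) (hP : ∀ s a s', 0 ≤ P s a s')
    (hPsum : ∀ s a, ∑ s', P s a s' = 1)
    (μ : S → ℝ) (hμ : ∀ s, 0 < μ s) (hμsum : ∑ s, μ s = 1)
    (R : S → A → ℝ) (hR : ∀ s a, |R s a| ≤ 1)
    (π : S → A → ℝ) (hπ : ∀ s a, 0 ≤ π s a) (hπsum : ∀ s, ∑ a, π s a = 1)
    (π' : S → A → ℝ) (hπ' : ∀ s a, 0 ≤ π' s a) (hπ'sum : ∀ s, ∑ a, π' s a = 1) :
    |mdpReturn γ P μ π' R - mdpReturn γ P μ π R| ≤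
      ((Fintype.card A : ℝ) / (1 - γ) ^ 2) *
        (∑ s, ∑ a, (π' s a - π s a) ^ 2) ^ ((1 : ℝ) / 2) := by
  have hM := Pmat_mem_rowStochastic hP hPsum hπ hπsum
  have hM' := Pmat_mem_rowStochastic hP hPsum hπ' hπ'sum
  set T := (∑ s, ∑ a, (π' s a - π s a) ^ 2) ^ ((1 : ℝ) / 2)
  have hadv (s : S) : |∑ a, (π' s a - π s a) * actionValue γ P π R s a| ≤
      Fintype.card A * T * (1 / (1 - γ)) := by
    calc _ ≤ (∑ a, |π' s a - π s a|) * (1 / (1 - γ)) := abs_sum_mul_le_sum_abs_mul _ _ _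
          fun a _ => abs_actionValue_le hγ0 hγ1 hP hPsum hπ hπsum hR s a
      _ ≤ Fintype.card A * T * (1 / (1 - γ)) := by
          gcongr
          simpa using Finset.sum_le_card_nsmul univ _ T
            fun a _ => abs_le_rpow_sum_sum_sq (fun s a => π' s a - π s a) s a
  rw [mdpReturn_sub_mdpReturn_s14 (isUnit_det_one_sub_smul_of_mem_rowStochastic hγ0 hγ1 hM)
    (isUnit_det_one_sub_smul_of_mem_rowStochastic hγ0 hγ1 hM')]
  calc _ ≤ (∑ s, dPi γ P μ π' s) * (Fintype.card A * T * (1 / (1 - γ))) :=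
        abs_sum_mul_le_sum_mul_of_nonneg univ
          (fun s _ => dPi_nonneg hγ0 hγ1 hM' (fun t => (hμ t).le) s) fun s _ => hadv s
    _ = _ := by
        rw [sum_dPi hγ0 hγ1 hM' hμsum]
        field_simp

theorem stmt_14 {S A : Type*} [Fintype S] [Fintype A] [Nonempty S] [Nonempty A] [DecidableEq S]
    (γ : ℝ) (hγ0 : 0 ≤ γ) (hγ1 : γ < 1)
    (P : S → A → S → ℝ) (hP : ∀ s a s', 0 ≤ P s a s')
    (hPsum : ∀ s a, ∑ s', P s a s' = 1)
    (μ : S → ℝ) (hμ : ∀ s, 0 < μ s) (hμsum : ∑ s, μ s = 1)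
    (R : S → A → ℝ) (hR : ∀ s a, |R s a| ≤ 1)
    (π : S → A → ℝ) (hπ : ∀ s a, 0 ≤ π s a) (hπsum : ∀ s, ∑ a, π s a = 1)
    (π' : S → A → ℝ) (hπ' : ∀ s a, 0 ≤ π' s a) (hπ'sum : ∀ s, ∑ a, π' s a = 1) :
    |mdpReturn γ P μ π' R - mdpReturn γ P μ π R| ≤
      ((Fintype.card A : ℝ) / (1 - γ) ^ 2) *
        (∑ s, ∑ a, (π' s a - π s a) ^ 2) ^ ((1 : ℝ) / 2) :=
  stmt_14_general γ hγ0 hγ1 P hP hPsum μ hμ hμsum R hR π hπ hπsum π' hπ' hπ'sum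
end
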